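/- arXiv:1801.06973 — 6 statements merged into one kernel-verified Lean document; each statement's English description precedes it below -/
import Mathlib

section
/- Let α > 0, h > 0, and let i be a natural number. Let S_i be the i-th sample-and-hold function of step h, and let J^α denote the Riemann–Liouville fractional integral of order α. Then for every t ≥ 0: (i) if 0 ≤ t ≤ i·h then J^α S_i(t) = 0; (ii) if i·h ≤ t ≤ (i+1)·h then J^α S_i(t) = (t − i·h)^α / Γ(α+1); (iii) if t ≥ (i+1)·h then J^α S_i(t) = ((t − i·h)^α − (t − (i+1)·h)^α) / Γ(α+1). -/
open MeasureTheory Real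

/-- The `i`-th sample-and-hold function (SHF) of step `h`:
`S_i(t) = 1` on `[i·h, (i+1)·h)` and `0` otherwise. -/
noncomputable def shf (h : ℝ) (i : ℕ) (t : ℝ) : ℝ :=
  if (i : ℝ) * h ≤ t ∧ t < ((i : ℝ) + 1) * h then 1 else 0

/-- The `i`-th right-handed triangular function (TF) of step `h`:
`T_i(t) = (t − i·h)/h` on `[i·h, (i+1)·h)` and `0` otherwise. -/
noncomputable def tf (h : ℝ) (i : ℕ) (t : ℝ) : ℝ :=
  if (i : ℝ) * h ≤ t ∧ t < ((i : ℝ) + 1) * h then (t - (i : ℝ) * h) / h else 0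

/-- Riemann–Liouville fractional integral of order `α`:
`J^α f(t) = (1/Γ(α)) ∫₀ᵗ (t − τ)^{α−1} f(τ) dτ`. -/
noncomputable def rlInt (α : ℝ) (f : ℝ → ℝ) (t : ℝ) : ℝ :=
  (1 / Real.Gamma α) * ∫ τ in (0:ℝ)..t, (t - τ) ^ (α - 1) * f τ

/-!
`J^α S_i(t)` is `1/Γ(α)` times the integral of the kernel `(t - τ)^{α-1}` over
`[0, t] ∩ [i h, (i+1) h)`, which up to a null set is the interval `(i h, min t ((i+1) h)]`.
The kernel has the explicit primitive `-(t - τ)^α / α`, and `α Γ(α) = Γ(α + 1)`.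
-/

lemma mul_shf_eq_indicator (f : ℝ → ℝ) (h : ℝ) (i : ℕ) :
    (fun τ => f τ * shf h i τ) = (Set.Ico ((i : ℝ) * h) (((i : ℝ) + 1) * h)).indicator f := by
  ext τ
  simp only [shf, Set.indicator, Set.mem_Ico]
  split_ifs <;> simp

lemma intervalIntegral_indicator_Ico {E : Type*} [NormedAddCommGroup E] [NormedSpace ℝ E]
    {a b c t : ℝ} (g : ℝ → E) (hct : c ≤ t) :
    ∫ τ in c..t, (Set.Ico a b).indicator g τ = ∫ τ in Set.Ioc (max c a) (min t b), g τ := by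
  rw [intervalIntegral.integral_of_le hct,
    integral_congr_ae (ae_restrict_of_ae (indicator_ae_eq_of_ae_eq_set Ico_ae_eq_Ioc)),
    setIntegral_indicator measurableSet_Ioc, Set.Ioc_inter_Ioc]

lemma integral_Ioc_sub_rpow {α : ℝ} (hα : 0 < α) {a c : ℝ} (hac : a ≤ c) (t : ℝ) :
    ∫ τ in Set.Ioc a c, (t - τ) ^ (α - 1) = ((t - a) ^ α - (t - c) ^ α) / α := by
  rw [← intervalIntegral.integral_of_le hac,
    intervalIntegral.integral_comp_sub_left (fun x => x ^ (α - 1)) t,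
    integral_rpow (Or.inl (by linarith)), sub_add_cancel]

lemma one_div_Gamma_mul_div {α : ℝ} (hα : α ≠ 0) (x : ℝ) :
    1 / Gamma α * (x / α) = x / Gamma (α + 1) := by
  rw [Gamma_add_one hα]
  ring

lemma rlInt_shf {h : ℝ} (hh : 0 ≤ h) (α : ℝ) (i : ℕ) {t : ℝ} (ht : 0 ≤ t) :
    rlInt α (shf h i) t =
      1 / Gamma α * ∫ τ in Set.Ioc ((i : ℝ) * h) (min t (((i : ℝ) + 1) * h)), (t - τ) ^ (α - 1) := by
  rw [rlInt, mul_shf_eq_indicator (fun τ => (t - τ) ^ (α - 1)),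
    intervalIntegral_indicator_Ico _ ht, max_eq_right (by positivity)]

/-- Explicit piecewise formula for `J^α S_i`. -/
theorem rlInt_shf_piecewise (α h : ℝ) (hα : 0 < α) (hh : 0 < h) (i : ℕ) (t : ℝ)
    (ht : 0 ≤ t) :
    (t ≤ (i : ℝ) * h → rlInt α (shf h i) t = 0) ∧
    ((i : ℝ) * h ≤ t → t ≤ ((i : ℝ) + 1) * h →
      rlInt α (shf h i) t = (t - (i : ℝ) * h) ^ α / Real.Gamma (α + 1)) ∧
    (((i : ℝ) + 1) * h ≤ t →
      rlInt α (shf h i) t =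
        ((t - (i : ℝ) * h) ^ α - (t - ((i : ℝ) + 1) * h) ^ α) / Real.Gamma (α + 1)) := by
  rw [rlInt_shf hh.le α i ht]
  refine ⟨fun hta => ?_, fun hat htb => ?_, fun hbt => ?_⟩
  · rw [Set.Ioc_eq_empty (min_le_left _ _ |>.trans hta).not_gt, setIntegral_empty, mul_zero]
  · rw [min_eq_left htb, integral_Ioc_sub_rpow hα hat, sub_self, zero_rpow hα.ne', sub_zero,
      one_div_Gamma_mul_div hα.ne']
  · have hab : (i : ℝ) * h ≤ ((i : ℝ) + 1) * h := by nlinarith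
    rw [min_eq_right hbt, integral_Ioc_sub_rpow hα hab, one_div_Gamma_mul_div hα.ne']
end

section
/- Let α > 0, h > 0, and let i, j be natural numbers. Let S_i be the i-th sample-and-hold function of step h. Then the Riemann–Liouville fractional integral of order α of S_i evaluated at the grid node t = j·h satisfies: J^α S_i(j·h) = (h^α / Γ(α+1)) · ((j−i)^α − (j−i−1)^α) whenever j ≥ i+1, and J^α S_i(j·h) = 0 whenever j ≤ i. (These are exactly the entries of the generalized one-shot operational matrix P_{αss} of Theorem 3.1.) -/
open MeasureTheory Real

/-! Up to a null set `S_i` is the indicator of `Ioc (i·h) ((i+1)·h)`, so at a node `T = j·h`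
the integral `∫₀ᵀ (T - τ)^{α-1} S_i(τ) dτ` is either empty (`j ≤ i`) or the integral of
`(T - τ)^{α-1}` over that whole cell, which is `((T - i·h)^α - (T - (i+1)·h)^α) / α`. -/

section IntervalIndicator

variable {E : Type*} [NormedAddCommGroup E] [NormedSpace ℝ E] {f : ℝ → E} {a b c d : ℝ}

theorem intervalIntegral_indicator_Ioc_of_le_of_le (hca : c ≤ a) (hab : a ≤ b) (hbd : b ≤ d) :
    ∫ x in c..d, (Set.Ioc a b).indicator f x = ∫ x in a..b, f x := by
  rw [intervalIntegral.integral_of_le (hca.trans (hab.trans hbd)),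
    intervalIntegral.integral_of_le hab, setIntegral_indicator measurableSet_Ioc,
    Set.inter_eq_right.2 (Set.Ioc_subset_Ioc hca hbd)]

theorem intervalIntegral_indicator_Ioc_of_le (hcd : c ≤ d) (hda : d ≤ a) :
    ∫ x in c..d, (Set.Ioc a b).indicator f x = 0 := by
  rw [intervalIntegral.integral_of_le hcd]
  refine setIntegral_eq_zero_of_forall_eq_zero fun x hx => Set.indicator_of_notMem ?_ f
  exact fun hx' => (hx.2.trans hda).not_gt hx'.1

end IntervalIndicator

theorem integral_sub_rpow_sub_one {α : ℝ} (hα : 0 < α) (a b T : ℝ) :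
    ∫ τ in a..b, (T - τ) ^ (α - 1) = ((T - a) ^ α - (T - b) ^ α) / α := by
  rw [intervalIntegral.integral_comp_sub_left (fun u : ℝ => u ^ (α - 1)),
    integral_rpow (Or.inl (by linarith))]
  norm_num

theorem mul_shf_ae_eq_indicator_Ioc (h : ℝ) (i : ℕ) (g : ℝ → ℝ) :
    (fun τ => g τ * shf h i τ) =ᵐ[volume]
      (Set.Ioc ((i : ℝ) * h) ((i + 1) * h)).indicator g := by
  have hIco :
      (fun τ => g τ * shf h i τ) = (Set.Ico ((i : ℝ) * h) ((i + 1) * h)).indicator g := by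
    ext τ
    simp only [shf, Set.indicator, Set.mem_Ico, mul_ite, mul_one, mul_zero]
  rw [hIco]
  exact indicator_ae_eq_of_ae_eq_set Ico_ae_eq_Ioc

theorem rlInt_shf_eq_integral_indicator (α h : ℝ) (i : ℕ) (T : ℝ) :
    rlInt α (shf h i) T = 1 / Gamma α *
      ∫ τ in (0 : ℝ)..T,
        (Set.Ioc ((i : ℝ) * h) ((i + 1) * h)).indicator (fun τ => (T - τ) ^ (α - 1)) τ := by
  rw [rlInt, intervalIntegral.integral_congr_ae
    ((mul_shf_ae_eq_indicator_Ioc h i _).mono fun _ hτ _ => hτ)]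

/-- Nodal values of `J^α S_i`: the entries of the one-shot operational matrix `P_{αss}`. -/
theorem rlInt_shf_node (α h : ℝ) (hα : 0 < α) (hh : 0 < h) (i j : ℕ) :
    (i + 1 ≤ j →
      rlInt α (shf h i) ((j : ℝ) * h) =
        h ^ α / Real.Gamma (α + 1) * (((j : ℝ) - i) ^ α - ((j : ℝ) - i - 1) ^ α)) ∧
    (j ≤ i → rlInt α (shf h i) ((j : ℝ) * h) = 0) := by
  refine ⟨fun hij => ?_, fun hji => ?_⟩
  · have hij : (i : ℝ) + 1 ≤ j := by exact_mod_cast hij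
    have hji1 : (0 : ℝ) ≤ j - i - 1 := by linarith
    rw [rlInt_shf_eq_integral_indicator, intervalIntegral_indicator_Ioc_of_le_of_le (by positivity)
      (by nlinarith) (by nlinarith), integral_sub_rpow_sub_one hα,
      show (j : ℝ) * h - i * h = (j - i) * h by ring,
      show (j : ℝ) * h - (i + 1) * h = (j - i - 1) * h by ring,
      mul_rpow (by linarith) hh.le, mul_rpow hji1 hh.le, Gamma_add_one hα.ne']
    field_simp
  · have hji : (j : ℝ) ≤ i := by exact_mod_cast hji
    rw [rlInt_shf_eq_integral_indicator,
      intervalIntegral_indicator_Ioc_of_le (by positivity) (by nlinarith), mul_zero]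
end

section
/- Let α > 0, h > 0, and let i, j be natural numbers with j ≥ i+1, and set k = j − i. Let S_i be the i-th sample-and-hold function of step h. Then the increment of the Riemann–Liouville fractional integral of order α of S_i between consecutive grid nodes satisfies J^α S_i((j+1)·h) − J^α S_i(j·h) = (h^α / Γ(α+1)) · ((k+1)^α − 2·k^α + (k−1)^α), while J^α S_i((i+1)·h) − J^α S_i(i·h) = h^α / Γ(α+1). (These are the entries ξ_k of the operational matrix P_{αst} of Theorem 3.1.) -/
open MeasureTheory Real

/-!
`S_i` is the indicator of `[i h, (i+1) h)`, so for `t ≥ (i+1) h` the substitution `x = t - τ` gives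
`J^α S_i(t) = ((t - i h)^α - (t - (i+1) h)^α) / Γ(α+1)`, while `J^α S_i(i h) = 0`. At the node
`t = n h` this is `h^α / Γ(α+1) · ((n-i)^α - (n-i-1)^α)`, and the increment between consecutive
nodes is the second difference of `x ↦ x^α` at `k = j - i`.
-/

open Set

lemma shf_eq_indicator (h : ℝ) (i : ℕ) :
    shf h i = (Ico ((i : ℝ) * h) (((i : ℝ) + 1) * h)).indicator 1 := by
  ext t
  simp only [shf, indicator_apply, mem_Ico, Pi.one_apply]

lemma integral_sub_left_rpow {r : ℝ} (hr : -1 < r) (t a b : ℝ) :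
    ∫ τ in a..b, (t - τ) ^ r = ((t - a) ^ (r + 1) - (t - b) ^ (r + 1)) / (r + 1) := by
  rw [intervalIntegral.integral_comp_sub_left (fun x => x ^ r), integral_rpow (Or.inl hr)]

section IndicatorIco

variable {f : ℝ → ℝ} {a b c t : ℝ}

lemma intervalIntegral_mul_indicator_Ico (hca : c ≤ a) (hab : a ≤ b) (hbt : b ≤ t) :
    ∫ τ in c..t, f τ * (Ico a b).indicator 1 τ = ∫ τ in a..b, f τ := by
  simp_rw [← indicator_mul_right, Pi.one_apply, mul_one]
  rw [intervalIntegral.integral_of_le (hca.trans (hab.trans hbt)),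
    intervalIntegral.integral_of_le hab, setIntegral_indicator measurableSet_Ico]
  refine setIntegral_congr_set ?_
  have hsub : Ico a b ⊆ Icc c t := fun x hx => ⟨hca.trans hx.1, hx.2.le.trans hbt⟩
  have hinter : (Ioc c t ∩ Ico a b : Set ℝ) =ᵐ[volume] (Icc c t ∩ Ico a b : Set ℝ) :=
    ae_eq_set_inter Ioc_ae_eq_Icc (Filter.EventuallyEq.refl _ _)
  rw [inter_eq_right.mpr hsub] at hinter
  exact hinter.trans Ico_ae_eq_Ioc

lemma intervalIntegral_mul_indicator_Ico_eq_zero (hca : c ≤ a) (hta : t ≤ a) :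
    ∫ τ in c..t, f τ * (Ico a b).indicator 1 τ = 0 := by
  refine intervalIntegral.integral_zero_ae ?_
  filter_upwards [Measure.ae_ne volume a] with τ hτa hτ
  have hτ_lt : τ < a := lt_of_le_of_ne (hτ.2.trans (max_le hca hta)) hτa
  simp [indicator_of_notMem (fun h : τ ∈ Ico a b => hτ_lt.not_ge h.1)]

end IndicatorIco

lemma rlInt_indicator_Ico {α a b t : ℝ} (hα : 0 < α) (ha : 0 ≤ a) (hab : a ≤ b) (hbt : b ≤ t) :
    rlInt α ((Ico a b).indicator 1) t = ((t - a) ^ α - (t - b) ^ α) / Gamma (α + 1) := by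
  rw [rlInt, intervalIntegral_mul_indicator_Ico ha hab hbt,
    integral_sub_left_rpow (by linarith) t a b, sub_add_cancel, Gamma_add_one hα.ne']
  field_simp

lemma rlInt_indicator_Ico_eq_zero {α a b t : ℝ} (ha : 0 ≤ a) (hta : t ≤ a) :
    rlInt α ((Ico a b).indicator 1) t = 0 := by
  rw [rlInt, intervalIntegral_mul_indicator_Ico_eq_zero ha hta, mul_zero]

lemma rlInt_shf_mul {α h s : ℝ} (hα : 0 < α) (hh : 0 ≤ h) {i : ℕ} (hs : (i : ℝ) + 1 ≤ s) :
    rlInt α (shf h i) (s * h) =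
      h ^ α / Gamma (α + 1) * ((s - i) ^ α - (s - i - 1) ^ α) := by
  rw [shf_eq_indicator, rlInt_indicator_Ico hα (by positivity) (by nlinarith) (by nlinarith),
    ← sub_mul, ← sub_mul, mul_rpow (by linarith) hh, mul_rpow (by linarith) hh, sub_sub]
  ring

/-- Increments of nodal values of `J^α S_i`: the entries `ξ_k` of `P_{αst}`. -/
theorem rlInt_shf_node_increment (α h : ℝ) (hα : 0 < α) (hh : 0 < h) (i j k : ℕ)
    (hij : i + 1 ≤ j) (hk : k = j - i) :
    rlInt α (shf h i) (((j : ℝ) + 1) * h) - rlInt α (shf h i) ((j : ℝ) * h) =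
      h ^ α / Real.Gamma (α + 1) *
        (((k : ℝ) + 1) ^ α - 2 * (k : ℝ) ^ α + ((k : ℝ) - 1) ^ α) ∧
    rlInt α (shf h i) (((i : ℝ) + 1) * h) - rlInt α (shf h i) ((i : ℝ) * h) =
      h ^ α / Real.Gamma (α + 1) := by
  have hj : (j : ℝ) = i + k := by rw [hk, Nat.cast_sub (by omega)]; ring
  have hij' : (i : ℝ) + 1 ≤ j := by exact_mod_cast hij
  constructor
  · rw [rlInt_shf_mul hα hh.le (by linarith), rlInt_shf_mul hα hh.le hij', hj]
    ring_nf
  · rw [rlInt_shf_mul hα hh.le le_rfl, shf_eq_indicator,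
      rlInt_indicator_Ico_eq_zero (by positivity) le_rfl]
    simp [zero_rpow hα.ne']
end

section
/- Let α > 0, h > 0, and let i be a natural number. Let T_i be the i-th right-handed triangular function of step h, and let J^α denote the Riemann–Liouville fractional integral of order α. Then for every t ≥ 0: (i) if 0 ≤ t ≤ i·h then J^α T_i(t) = 0; (ii) if i·h ≤ t ≤ (i+1)·h then J^α T_i(t) = (t − i·h)^{α+1} / (h·Γ(α+2)); (iii) if t ≥ (i+1)·h then J^α T_i(t) = ((t − i·h)^{α+1} − (t − (i+1)·h)^{α+1} − (α+1)·h·(t − (i+1)·h)^α) / (h·Γ(α+2)). -/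
open MeasureTheory Real

/-!
On its support `[ih, (i+1)h)` the triangular function is `(τ - ih)/h`, so `J^α T_i(t)` equals
`(1/(h Γ(α))) ∫_{ih}^{c} (t - τ)^(α-1) (τ - ih) dτ` with `c = min t ((i+1)h)`. Writing
`τ - ih = (t - ih) - (t - τ)` splits the integrand into two powers of `t - τ`, which integrate to
`((t - ih)^(α+1) - (t - c)^(α+1) - (α+1)(c - ih)(t - c)^α) / (α(α+1))`; together with
`Γ(α+2) = α(α+1)Γ(α)`, the cases `c = t` and `c = (i+1)h` are (ii) and (iii).
-/

theorem Real.rpow_add_one_of_ne {y : ℝ} (hy : y + 1 ≠ 0) (x : ℝ) : x ^ (y + 1) = x ^ y * x := by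
  rcases eq_or_ne x 0 with rfl | hx
  · exact rpow_add_one' le_rfl hy
  · exact rpow_add_one hx y

theorem Real.Gamma_add_two {s : ℝ} (hs : 0 < s) : Gamma (s + 2) = s * (s + 1) * Gamma s := by
  rw [show s + 2 = s + 1 + 1 by ring, Gamma_add_one (by linarith), Gamma_add_one hs.ne']
  ring

theorem IntervalIntegrable.mul_bdd {𝕜 : Type*} [NormedRing 𝕜] {f g : ℝ → 𝕜} {μ : Measure ℝ}
    {a b : ℝ} (C : ℝ) (hf : IntervalIntegrable f μ a b) (hg : AEStronglyMeasurable g μ)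
    (hC : ∀ x, ‖g x‖ ≤ C) : IntervalIntegrable (fun x => f x * g x) μ a b :=
  ⟨hf.1.mul_bdd hg.restrict (ae_of_all _ hC), hf.2.mul_bdd hg.restrict (ae_of_all _ hC)⟩

theorem intervalIntegrable_sub_rpow {β : ℝ} (hβ : -1 < β) (t a c : ℝ) :
    IntervalIntegrable (fun τ => (t - τ) ^ β) volume a c := by
  simpa using
    (intervalIntegral.intervalIntegrable_rpow' hβ (a := t - a) (b := t - c)).comp_sub_left t

theorem integral_sub_rpow {β : ℝ} (hβ : -1 < β) (t a c : ℝ) :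
    ∫ τ in a..c, (t - τ) ^ β = ((t - a) ^ (β + 1) - (t - c) ^ (β + 1)) / (β + 1) := by
  rw [intervalIntegral.integral_comp_sub_left (fun x => x ^ β), integral_rpow (Or.inl hβ)]

theorem integral_sub_rpow_mul_sub {α : ℝ} (hα : 0 < α) (t a c : ℝ) :
    ∫ τ in a..c, (t - τ) ^ (α - 1) * (τ - a) =
      ((t - a) ^ (α + 1) - (t - c) ^ (α + 1) - (α + 1) * (c - a) * (t - c) ^ α) /
        (α * (α + 1)) := by
  have hpow : ∀ x : ℝ, x ^ α = x ^ (α - 1) * x := fun x => by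
    simpa using Real.rpow_add_one_of_ne (y := α - 1) (by simp [hα.ne']) x
  have hsplit : ∀ τ, (t - τ) ^ (α - 1) * (τ - a) = (t - a) * (t - τ) ^ (α - 1) - (t - τ) ^ α :=
    fun τ => by rw [hpow]; ring
  simp_rw [hsplit]
  rw [intervalIntegral.integral_sub
      ((intervalIntegrable_sub_rpow (by linarith) t a c).const_mul _)
      (intervalIntegrable_sub_rpow (by linarith) t a c),
    intervalIntegral.integral_const_mul, integral_sub_rpow (by linarith),
    integral_sub_rpow (by linarith), sub_add_cancel, Real.rpow_add_one_of_ne (by linarith),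
    Real.rpow_add_one_of_ne (by linarith)]
  field_simp
  ring

theorem tf_eq_indicator (h : ℝ) (i : ℕ) :
    tf h i = (Set.Ico ((i : ℝ) * h) ((i + 1) * h)).indicator (fun τ => (τ - i * h) / h) := by
  ext τ
  simp [tf, Set.indicator]

theorem measurable_tf (h : ℝ) (i : ℕ) : Measurable (tf h i) := by
  rw [tf_eq_indicator]
  exact (by fun_prop : Measurable fun τ : ℝ => (τ - i * h) / h).indicator measurableSet_Ico

section tf

variable {h : ℝ} {i : ℕ}

theorem norm_tf_le_one (hh : 0 < h) (τ : ℝ) : ‖tf h i τ‖ ≤ 1 := by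
  unfold tf
  split_ifs with hτ
  · rw [Real.norm_eq_abs, abs_le, le_div_iff₀ hh, div_le_iff₀ hh]
    constructor <;> linarith
  · simp

theorem tf_eq_zero_of_le {τ : ℝ} (hτ : τ ≤ i * h) : tf h i τ = 0 := by
  unfold tf
  split_ifs with h'
  · simp [le_antisymm hτ h'.1]
  · rfl

theorem tf_eq_zero_of_ge {τ : ℝ} (hτ : (i + 1) * h ≤ τ) : tf h i τ = 0 :=
  if_neg fun h' => (hτ.trans_lt h'.2).false

theorem tf_of_mem_Ico {τ : ℝ} (hτ : τ ∈ Set.Ico ((i : ℝ) * h) ((i + 1) * h)) :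
    tf h i τ = (τ - i * h) / h :=
  if_pos hτ

end tf

section rlInt_tf

variable {α h : ℝ} {i : ℕ}

theorem intervalIntegrable_sub_rpow_mul_tf (hα : 0 < α) (hh : 0 < h) (t p q : ℝ) :
    IntervalIntegrable (fun τ => (t - τ) ^ (α - 1) * tf h i τ) volume p q :=
  (intervalIntegrable_sub_rpow (by linarith) t p q).mul_bdd 1
    (measurable_tf h i).aestronglyMeasurable (norm_tf_le_one hh)

theorem integral_sub_rpow_mul_tf_eq_zero {t p q : ℝ} (hpq : ∀ τ ∈ Set.uIoc p q, tf h i τ = 0) :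
    ∫ τ in p..q, (t - τ) ^ (α - 1) * tf h i τ = 0 :=
  intervalIntegral.integral_zero_ae (ae_of_all _ fun τ hτ => by rw [hpq τ hτ, mul_zero])

theorem integral_sub_rpow_mul_tf_of_le (t : ℝ) {c : ℝ} (hac : (i : ℝ) * h ≤ c)
    (hcb : c ≤ (i + 1) * h) :
    ∫ τ in (i * h)..c, (t - τ) ^ (α - 1) * tf h i τ =
      (∫ τ in (i * h)..c, (t - τ) ^ (α - 1) * (τ - i * h)) / h := by
  rw [← intervalIntegral.integral_div]
  refine intervalIntegral.integral_congr_ae ?_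
  filter_upwards [Measure.ae_ne volume c] with τ hτc hτ
  rw [Set.uIoc_of_le hac] at hτ
  rw [tf_of_mem_Ico ⟨hτ.1.le, (lt_of_le_of_ne hτ.2 hτc).trans_le hcb⟩, mul_div_assoc]

theorem rlInt_tf_eq (hα : 0 < α) (hh : 0 < h) {t : ℝ} (ht : (i : ℝ) * h ≤ t) :
    rlInt α (tf h i) t =
      ((t - i * h) ^ (α + 1) - (t - min t ((i + 1) * h)) ^ (α + 1) -
          (α + 1) * (min t ((i + 1) * h) - i * h) * (t - min t ((i + 1) * h)) ^ α) /
        (h * Gamma (α + 2)) := by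
  set a : ℝ := i * h
  set c := min t ((i + 1) * h)
  have ha : 0 ≤ a := by positivity
  have hac : a ≤ c := le_min ht (by linarith)
  have hint := intervalIntegrable_sub_rpow_mul_tf (i := i) hα hh t
  have hbelow : ∫ τ in (0 : ℝ)..a, (t - τ) ^ (α - 1) * tf h i τ = 0 :=
    integral_sub_rpow_mul_tf_eq_zero fun τ hτ =>
      tf_eq_zero_of_le ((Set.uIoc_of_le ha ▸ hτ).2)
  have habove : ∫ τ in c..t, (t - τ) ^ (α - 1) * tf h i τ = 0 :=
    integral_sub_rpow_mul_tf_eq_zero fun τ hτ => by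
      rw [Set.uIoc_of_le (min_le_left _ _)] at hτ
      exact tf_eq_zero_of_ge ((min_lt_iff.mp hτ.1).resolve_left hτ.2.not_gt).le
  rw [rlInt, ← intervalIntegral.integral_add_adjacent_intervals (hint 0 a) (hint a t),
    ← intervalIntegral.integral_add_adjacent_intervals (hint a c) (hint c t), hbelow, habove,
    integral_sub_rpow_mul_tf_of_le t hac (min_le_right _ _), integral_sub_rpow_mul_sub hα,
    Real.Gamma_add_two hα]
  have := (Real.Gamma_pos_of_pos hα).ne'
  field_simp
  ring

end rlInt_tf

theorem rlInt_tf_piecewise_general (α h : ℝ) (hα : 0 < α) (hh : 0 < h) (i : ℕ) (t : ℝ) :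
    (t ≤ (i : ℝ) * h → rlInt α (tf h i) t = 0) ∧
    ((i : ℝ) * h ≤ t → t ≤ ((i : ℝ) + 1) * h →
      rlInt α (tf h i) t = (t - (i : ℝ) * h) ^ (α + 1) / (h * Real.Gamma (α + 2))) ∧
    (((i : ℝ) + 1) * h ≤ t →
      rlInt α (tf h i) t =
        ((t - (i : ℝ) * h) ^ (α + 1) - (t - ((i : ℝ) + 1) * h) ^ (α + 1) -
            (α + 1) * h * (t - ((i : ℝ) + 1) * h) ^ α) / (h * Real.Gamma (α + 2))) := by
  refine ⟨fun hti => ?_, fun hit htb => ?_, fun hbt => ?_⟩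
  · rw [rlInt, integral_sub_rpow_mul_tf_eq_zero, mul_zero]
    intro τ hτ
    exact tf_eq_zero_of_le (hτ.2.trans (max_le (by positivity) hti))
  · rw [rlInt_tf_eq hα hh hit, min_eq_left htb, sub_self, zero_rpow (by linarith),
      zero_rpow hα.ne']
    ring
  · rw [rlInt_tf_eq hα hh (by linarith), min_eq_right hbt]
    ring

/-- Explicit piecewise formula for `J^α T_i`. -/
theorem rlInt_tf_piecewise (α h : ℝ) (hα : 0 < α) (hh : 0 < h) (i : ℕ) (t : ℝ)
    (ht : 0 ≤ t) :
    (t ≤ (i : ℝ) * h → rlInt α (tf h i) t = 0) ∧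
    ((i : ℝ) * h ≤ t → t ≤ ((i : ℝ) + 1) * h →
      rlInt α (tf h i) t = (t - (i : ℝ) * h) ^ (α + 1) / (h * Real.Gamma (α + 2))) ∧
    (((i : ℝ) + 1) * h ≤ t →
      rlInt α (tf h i) t =
        ((t - (i : ℝ) * h) ^ (α + 1) - (t - ((i : ℝ) + 1) * h) ^ (α + 1) -
            (α + 1) * h * (t - ((i : ℝ) + 1) * h) ^ α) / (h * Real.Gamma (α + 2))) :=
  rlInt_tf_piecewise_general α h hα hh i t
end

section
/- Let α > 0, h > 0, m a positive integer, and let c_0, …, c_{m−1} and d_0, …, d_{m−1} be real numbers. Let f be the hybrid function on [0, m·h) defined by f(t) = c_i + d_i·(t − i·h)/h for t ∈ [i·h, (i+1)·h) (i = 0, …, m−1), and f(t) = 0 for t ≥ m·h. Then for every integer j with 1 ≤ j ≤ m, the Riemann–Liouville fractional integral of order α of f at the node t = j·h equals J^α f(j·h) = (h^α/Γ(α+1)) · Σ_{i=0}^{j−1} c_i · ((j−i)^α − (j−i−1)^α) + (h^α/Γ(α+2)) · Σ_{i=0}^{j−1} d_i · ((j−i)^{α+1} − (j−i−1)^α·(j−i+α)).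 (This is the exact nodal content of Theorem 3.3.) -/
/-!
On the cell `[i·h, (i+1)·h)` the hybrid function is the affine function `c_i + d_i·(τ − i·h)/h`,
so `J^α f(j·h)` is a sum of `j` integrals of the kernel `(j·h − τ)^{α−1}` against affine functions.
Each is elementary: writing `τ − i·h = (j·h − i·h) − (j·h − τ)` reduces the linear part to
integrals of `(j·h − τ)^{α−1}` and `(j·h − τ)^α`, and the formula follows after pulling out `h^α`
and using `Γ(α + 2) = (α + 1)·α·Γ(α)`.
-/

open MeasureTheory Real

open Set Finset

theorem intervalIntegral.integral_eq_sum_of_eqOn_uIoo {E : Type*} [NormedAddCommGroup E]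
    [NormedSpace ℝ E] {μ : Measure ℝ} [NullSingletonClass μ] {F : ℝ → E} (G : ℕ → ℝ → E)
    (a : ℕ → ℝ) (n : ℕ) (hG : ∀ k < n, IntervalIntegrable (G k) μ (a k) (a (k + 1)))
    (hGF : ∀ k < n, EqOn (G k) F (uIoo (a k) (a (k + 1)))) :
    ∫ x in a 0..a n, F x ∂μ = ∑ k ∈ range n, ∫ x in a k..a (k + 1), G k x ∂μ := by
  rw [← sum_integral_adjacent_intervals fun k hk => (hG k hk).congr_uIoo (hGF k hk)]
  exact sum_congr rfl fun k hk => (integral_congr_uIoo (hGF k (mem_range.mp hk))).symm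

theorem mem_Ico_natCast_mul_iff {h τ : ℝ} {i : ℕ} (hτ : τ ∈ Ico ((i : ℝ) * h) ((i + 1) * h))
    (k : ℕ) : τ ∈ Ico ((k : ℝ) * h) ((k + 1) * h) ↔ k = i := by
  have hh : 0 < h := by nlinarith [hτ.1, hτ.2]
  refine ⟨fun ⟨hk₁, hk₂⟩ => ?_, fun hki => hki ▸ hτ⟩
  have hki : (k : ℝ) < i + 1 := lt_of_mul_lt_mul_right (hk₁.trans_lt hτ.2) hh.le
  have hik : (i : ℝ) < k + 1 := lt_of_mul_lt_mul_right (hτ.1.trans_lt hk₂) hh.le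
  norm_cast at hki hik
  omega

theorem sum_shf_tf_of_mem_Ico {h τ : ℝ} {i m : ℕ} (him : i < m) (c d : ℕ → ℝ)
    (hτ : τ ∈ Ico ((i : ℝ) * h) ((i + 1) * h)) :
    ∑ k ∈ range m, (c k * shf h k τ + d k * tf h k τ) = c i + d i * ((τ - i * h) / h) := by
  simp only [shf, tf, ← Set.mem_Ico, mem_Ico_natCast_mul_iff hτ, mul_ite, mul_one, mul_zero,
    sum_add_distrib, sum_ite_eq', Finset.mem_range, if_pos him]

theorem integral_rpow_kernel {α : ℝ} (hα : 0 < α) (t a b : ℝ) :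
    ∫ τ in a..b, (t - τ) ^ (α - 1) = ((t - a) ^ α - (t - b) ^ α) / α := by
  rw [intervalIntegral.integral_comp_sub_left (fun x => x ^ (α - 1)),
    integral_rpow (Or.inl (by linarith)), sub_add_cancel]

theorem intervalIntegrable_rpow_kernel {α : ℝ} (hα : 0 < α) (t a b : ℝ) :
    IntervalIntegrable (fun τ => (t - τ) ^ (α - 1)) volume a b := by
  simpa using (intervalIntegral.intervalIntegrable_rpow' (a := t - a) (b := t - b)
    (by linarith : -1 < α - 1)).comp_sub_left t

theorem intervalIntegrable_rpow_kernel_mul {α : ℝ} (hα : 0 < α) {g : ℝ → ℝ} (hg : Continuous g)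
    (t a b : ℝ) : IntervalIntegrable (fun τ => (t - τ) ^ (α - 1) * g τ) volume a b :=
  (intervalIntegrable_rpow_kernel hα t a b).mul_continuousOn hg.continuousOn

theorem integral_rpow_kernel_mul_sub {α t a b : ℝ} (hα : 0 < α) (hat : a ≤ t) (hbt : b ≤ t) :
    ∫ τ in a..b, (t - τ) ^ (α - 1) * (τ - a) =
      (t - a) * (((t - a) ^ α - (t - b) ^ α) / α) -
        ((t - a) ^ (α + 1) - (t - b) ^ (α + 1)) / (α + 1) := by
  have hsplit : EqOn (fun τ => (t - τ) ^ (α - 1) * (τ - a))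
      (fun τ => (t - a) * (t - τ) ^ (α - 1) - (t - τ) ^ (α + 1 - 1)) (uIcc a b) := by
    intro τ hτ
    have hτt : 0 ≤ t - τ := sub_nonneg.mpr (hτ.2.trans (sup_le hat hbt))
    have hpow := rpow_add_one' hτt (by linarith : α - 1 + 1 ≠ 0)
    rw [sub_add_cancel] at hpow
    simp only [add_sub_cancel_right, hpow]
    ring
  rw [intervalIntegral.integral_congr hsplit,
    intervalIntegral.integral_sub ((intervalIntegrable_rpow_kernel hα t a b).const_mul _)
      (intervalIntegrable_rpow_kernel (by linarith) t a b),
    intervalIntegral.integral_const_mul, integral_rpow_kernel hα,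
    integral_rpow_kernel (by linarith)]

theorem integral_rpow_kernel_affine_cell {α h : ℝ} (hα : 0 < α) (hh : 0 < h) {x n : ℝ}
    (hxn : x + 1 ≤ n) (C D : ℝ) :
    1 / Gamma α *
        ∫ τ in x * h..(x + 1) * h, (n * h - τ) ^ (α - 1) * (C + D * ((τ - x * h) / h)) =
      h ^ α / Gamma (α + 1) * (C * ((n - x) ^ α - (n - x - 1) ^ α)) +
        h ^ α / Gamma (α + 2) * (D * ((n - x) ^ (α + 1) - (n - x - 1) ^ α * (n - x + α))) := by
  have hsplit : ∀ τ, (n * h - τ) ^ (α - 1) * (C + D * ((τ - x * h) / h)) =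
      C * (n * h - τ) ^ (α - 1) + D / h * ((n * h - τ) ^ (α - 1) * (τ - x * h)) := fun τ => by
    ring
  simp only [hsplit]
  rw [intervalIntegral.integral_add ((intervalIntegrable_rpow_kernel hα _ _ _).const_mul C)
      ((intervalIntegrable_rpow_kernel_mul hα (by fun_prop) _ _ _).const_mul _),
    intervalIntegral.integral_const_mul, intervalIntegral.integral_const_mul,
    integral_rpow_kernel hα, integral_rpow_kernel_mul_sub hα (by nlinarith) (by nlinarith)]
  have hu : n * h - x * h = (n - x) * h := by ring
  have hv : n * h - (x + 1) * h = (n - x - 1) * h := by ring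
  have hN : 0 ≤ n - x - 1 := by linarith
  rw [hu, hv, mul_rpow (by linarith) hh.le, mul_rpow hN hh.le, mul_rpow (by linarith) hh.le,
    mul_rpow hN hh.le, rpow_add_one' (by linarith) (by positivity),
    rpow_add_one' hN (by positivity), rpow_add_one' hh.le (by positivity)]
  have hG1 : Gamma (α + 1) = α * Gamma α := Gamma_add_one hα.ne'
  have hG2 : Gamma (α + 2) = (α + 1) * (α * Gamma α) := by
    rw [show α + 2 = α + 1 + 1 by ring, Gamma_add_one (by linarith), hG1]
  rw [hG1, hG2]
  have := Gamma_pos_of_pos hα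
  field_simp
  ring

theorem rlInt_hybrid_node_general (α h : ℝ) (hα : 0 < α) (hh : 0 < h) (m : ℕ)
    (c d : ℕ → ℝ) (f : ℝ → ℝ)
    (hf : ∀ t : ℝ, f t = ∑ i ∈ Finset.range m, (c i * shf h i t + d i * tf h i t))
    (j : ℕ) (hjm : j ≤ m) :
    rlInt α f ((j : ℝ) * h) =
      h ^ α / Real.Gamma (α + 1) *
          ∑ i ∈ Finset.range j, c i * (((j : ℝ) - i) ^ α - ((j : ℝ) - i - 1) ^ α) +
        h ^ α / Real.Gamma (α + 2) *
          ∑ i ∈ Finset.range j,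
            d i * (((j : ℝ) - i) ^ (α + 1) - ((j : ℝ) - i - 1) ^ α * ((j : ℝ) - i + α)) := by
  have hcells := intervalIntegral.integral_eq_sum_of_eqOn_uIoo
    (F := fun τ => ((j : ℝ) * h - τ) ^ (α - 1) * f τ)
    (fun i τ => ((j : ℝ) * h - τ) ^ (α - 1) * (c i + d i * ((τ - i * h) / h)))
    (fun k => (k : ℝ) * h) j
    (fun i _ => intervalIntegrable_rpow_kernel_mul hα (by fun_prop) _ _ _)
    (fun i hij τ hτ => by
      rw [uIoo_of_le (by gcongr; linarith)] at hτ
      dsimp only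
      rw [hf, sum_shf_tf_of_mem_Ico (hij.trans_le hjm) c d
        (Ioo_subset_Ico_self (by exact_mod_cast hτ))])
  simp only [Nat.cast_zero, zero_mul, Nat.cast_add, Nat.cast_one] at hcells
  rw [rlInt, hcells, mul_sum, sum_congr rfl fun i hi => integral_rpow_kernel_affine_cell hα hh
      (by exact_mod_cast mem_range.mp hi) (c i) (d i), sum_add_distrib, mul_sum, mul_sum]

/-- Nodal content of Theorem 3.3: the RL fractional integral of a hybrid function at
grid nodes is given by the one-shot operational matrices. -/
theorem rlInt_hybrid_node (α h : ℝ) (hα : 0 < α) (hh : 0 < h) (m : ℕ) (hm : 0 < m)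
    (c d : ℕ → ℝ) (f : ℝ → ℝ)
    (hf : ∀ t : ℝ, f t = ∑ i ∈ Finset.range m, (c i * shf h i t + d i * tf h i t))
    (j : ℕ) (hj1 : 1 ≤ j) (hjm : j ≤ m) :
    rlInt α f ((j : ℝ) * h) =
      h ^ α / Real.Gamma (α + 1) *
          ∑ i ∈ Finset.range j, c i * (((j : ℝ) - i) ^ α - ((j : ℝ) - i - 1) ^ α) +
        h ^ α / Real.Gamma (α + 2) *
          ∑ i ∈ Finset.range j,
            d i * (((j : ℝ) - i) ^ (α + 1) - ((j : ℝ) - i - 1) ^ α * ((j : ℝ) - i + α)) :=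
  rlInt_hybrid_node_general α h hα hh m c d f hf j hjm
end

section
/- Let h > 0 and let i be a natural number. Let T_i be the i-th right-handed triangular function of step h. Then for every t ≥ 0, the first-order integral of T_i satisfies exactly: ∫₀ᵗ T_i(τ) dτ = 0 for t ≤ i·h, = (t − i·h)²/(2h) for i·h ≤ t ≤ (i+1)·h, and = h/2 for t ≥ (i+1)·h. In particular, at every grid node t = j·h one has ∫₀^{j·h} T_i(τ) dτ = h/2 if j ≥ i+1 and 0 if j ≤ i, which are the entries of the operational matrices P_{1ts} and P_{1tt} of Equation (10). -/
open MeasureTheory Real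

/-! `T_i` vanishes left of `i·h` (at `i·h` itself the ramp is `0`) and from `(i+1)·h` on, and
coincides with the ramp `(τ - i·h)/h` on `(i·h, (i+1)·h)`. Integrating, `∫₀ᵗ T_i` is `0`
up to `i·h`, grows as `(t - i·h)²/(2h)` across the support, and stays at `h²/(2h) = h/2`. -/

namespace TriangularFunction

variable {h : ℝ} {i : ℕ}

lemma tf_eq_zero_of_le {τ : ℝ} (hτ : τ ≤ i * h) : tf h i τ = 0 := by
  unfold tf
  split_ifs with hmem
  · rw [le_antisymm hτ hmem.1, sub_self, zero_div]
  · rfl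

lemma tf_eq_zero_of_ge {τ : ℝ} (hτ : ((i : ℝ) + 1) * h ≤ τ) : tf h i τ = 0 :=
  if_neg fun hmem => hmem.2.not_ge hτ

lemma tf_eq_of_mem_Ico {τ : ℝ} (hτ : τ ∈ Set.Ico ((i : ℝ) * h) (((i : ℝ) + 1) * h)) :
    tf h i τ = (τ - i * h) / h :=
  if_pos hτ

lemma tf_eq_indicator :
    tf h i = (Set.Ico ((i : ℝ) * h) (((i : ℝ) + 1) * h)).indicator fun τ => (τ - i * h) / h := by
  ext τ
  simp only [tf, Set.indicator, Set.mem_Ico]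

lemma integrable_tf : Integrable (tf h i) := by
  rw [tf_eq_indicator, integrable_indicator_iff measurableSet_Ico]
  exact (by fun_prop : Continuous fun τ : ℝ => (τ - i * h) / h).integrableOn_Icc.mono_set
    Set.Ico_subset_Icc_self

lemma intervalIntegral_tf_eq_zero_of_le {a b : ℝ} (ha : a ≤ i * h) (hb : b ≤ i * h) :
    ∫ τ in a..b, tf h i τ = 0 := by
  rw [intervalIntegral.integral_congr (g := fun _ => 0), intervalIntegral.integral_zero]
  exact fun τ hτ => tf_eq_zero_of_le (hτ.2.trans (max_le ha hb))

lemma intervalIntegral_tf_eq_zero_of_ge {a b : ℝ} (ha : ((i : ℝ) + 1) * h ≤ a)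
    (hb : ((i : ℝ) + 1) * h ≤ b) : ∫ τ in a..b, tf h i τ = 0 := by
  rw [intervalIntegral.integral_congr (g := fun _ => 0), intervalIntegral.integral_zero]
  exact fun τ hτ => tf_eq_zero_of_ge ((le_min ha hb).trans hτ.1)

lemma intervalIntegral_tf_of_mem_Icc {t : ℝ} (h₁ : i * h ≤ t) (h₂ : t ≤ ((i : ℝ) + 1) * h) :
    ∫ τ in (i * h : ℝ)..t, tf h i τ = (t - i * h) ^ 2 / (2 * h) := by
  rw [intervalIntegral.integral_congr_Ioo_of_le h₁
      fun τ hτ => tf_eq_of_mem_Ico ⟨hτ.1.le, hτ.2.trans_le h₂⟩,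
    intervalIntegral.integral_div, intervalIntegral.integral_comp_sub_right (fun τ => τ),
    integral_id]
  ring

lemma intervalIntegral_zero_tf_of_mem_Icc (hh : 0 < h) {t : ℝ} (h₁ : i * h ≤ t)
    (h₂ : t ≤ ((i : ℝ) + 1) * h) :
    ∫ τ in (0 : ℝ)..t, tf h i τ = (t - i * h) ^ 2 / (2 * h) := by
  rw [← intervalIntegral.integral_add_adjacent_intervals (b := i * h)
      (integrable_tf.intervalIntegrable) integrable_tf.intervalIntegrable,
    intervalIntegral_tf_eq_zero_of_le (by positivity) le_rfl, zero_add,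
    intervalIntegral_tf_of_mem_Icc h₁ h₂]

lemma intervalIntegral_zero_tf_of_ge (hh : 0 < h) {t : ℝ} (ht : ((i : ℝ) + 1) * h ≤ t) :
    ∫ τ in (0 : ℝ)..t, tf h i τ = h / 2 := by
  have hih : (i : ℝ) * h ≤ ((i : ℝ) + 1) * h := by nlinarith
  rw [← intervalIntegral.integral_add_adjacent_intervals (b := ((i : ℝ) + 1) * h)
      integrable_tf.intervalIntegrable integrable_tf.intervalIntegrable,
    intervalIntegral_zero_tf_of_mem_Icc hh hih le_rfl, intervalIntegral_tf_eq_zero_of_ge le_rfl ht]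
  field_simp
  ring

end TriangularFunction

open TriangularFunction in
/-- First-order integral of the triangular function `T_i`, piecewise and at grid nodes:
the entries of the operational matrices `P_{1ts}` and `P_{1tt}`. -/
theorem integral_tf (h : ℝ) (hh : 0 < h) (i : ℕ) :
    (∀ t : ℝ, 0 ≤ t → t ≤ (i : ℝ) * h → (∫ τ in (0:ℝ)..t, tf h i τ) = 0) ∧
    (∀ t : ℝ, (i : ℝ) * h ≤ t → t ≤ ((i : ℝ) + 1) * h →
      (∫ τ in (0:ℝ)..t, tf h i τ) = (t - (i : ℝ) * h) ^ 2 / (2 * h)) ∧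
    (∀ t : ℝ, ((i : ℝ) + 1) * h ≤ t → (∫ τ in (0:ℝ)..t, tf h i τ) = h / 2) ∧
    (∀ j : ℕ, i + 1 ≤ j → (∫ τ in (0:ℝ)..((j : ℝ) * h), tf h i τ) = h / 2) ∧
    (∀ j : ℕ, j ≤ i → (∫ τ in (0:ℝ)..((j : ℝ) * h), tf h i τ) = 0) := by
  refine ⟨fun t h₀ ht => intervalIntegral_tf_eq_zero_of_le (h₀.trans ht) ht,
    fun t => intervalIntegral_zero_tf_of_mem_Icc hh, fun t => intervalIntegral_zero_tf_of_ge hh,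
    fun j hj => intervalIntegral_zero_tf_of_ge hh ?_,
    fun j hj => intervalIntegral_tf_eq_zero_of_le (by positivity) ?_⟩
  · exact mul_le_mul_of_nonneg_right (by exact_mod_cast hj) hh.le
  · exact mul_le_mul_of_nonneg_right (by exact_mod_cast hj) hh.le
end
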